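/- arXiv:1702.08079 — 3 statements merged into one kernel-verified Lean document; each statement's English description precedes it below -/
import Mathlib

section
/- Let D be a digraph on vertex set {0, 1, ..., K-1} (K ≥ L ≥ 1) with arc set consisting of all (j, i) with i ≡ j + m (mod K) for some m ∈ {1, ..., L-1}. Then every set of K - L + 1 cyclically consecutive vertices {j, j+1, ..., j+K-L} (mod K) induces an acyclic sub-digraph of D. -/
def DigraphAcyclic {V : Type*} (A : V → V → Prop) : Prop :=
  ∀ v, ¬ Relation.TransGen A v v

def Restrict {V : Type*} (A : V → V → Prop) (S : Set V) : V → V → Prop :=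
  fun u v => A u v ∧ u ∈ S ∧ v ∈ S

def AcyclicOn {V : Type*} (A : V → V → Prop) (S : Set V) : Prop :=
  DigraphAcyclic (Restrict A S)

/-- The conflict digraph of the `(K, L)` regular network: vertices are `ZMod K`, with an
arc from `j` to `i` whenever `i ≡ j + m (mod K)` for some `m ∈ {1, ..., L-1}`. -/
def RegularConflict (K L : ℕ) : ZMod K → ZMod K → Prop :=
  fun j i => ∃ m : ℕ, 1 ≤ m ∧ m ≤ L - 1 ∧ i = j + (m : ZMod K)

/-- In the conflict digraph of the `(K, L)` regular network (`K ≥ L ≥ 1`), every set of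
`K - L + 1` cyclically consecutive vertices `{j, j+1, ..., j+(K-L)}` induces an acyclic
sub-digraph. -/
theorem stmt9 (K L : ℕ) [NeZero K] (hL : 1 ≤ L) (hKL : L ≤ K) (j : ZMod K) :
    AcyclicOn (RegularConflict K L)
      {x : ZMod K | ∃ t : ℕ, t ≤ K - L ∧ x = j + (t : ZMod K)} := by
  set S : Set (ZMod K) := {x : ZMod K | ∃ t : ℕ, t ≤ K - L ∧ x = j + (t : ZMod K)}
  have hK : 0 < K := Nat.pos_of_ne_zero (NeZero.ne K)
  -- key step lemma
  have key : ∀ u v, Restrict (RegularConflict K L) S u v →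
      ∀ t₁ : ℕ, t₁ ≤ K - L → u = j + (t₁ : ZMod K) →
      ∃ t₂ : ℕ, t₂ ≤ K - L ∧ v = j + (t₂ : ZMod K) ∧ t₁ < t₂ := by
    rintro u v ⟨⟨m, hm1, hm2, hv⟩, _, t₂, ht₂, hv'⟩ t₁ ht₁ hu
    refine ⟨t₂, ht₂, hv', ?_⟩
    have hcast : ((t₁ + m : ℕ) : ZMod K) = (t₂ : ZMod K) := by
      push_cast
      have h := hv'.symm.trans hv
      rw [hu] at h
      linear_combination -h
    have h1 : t₁ + m < K := by omega
    have h2 : t₂ < K := by omega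
    have := ZMod.val_cast_of_lt h1
    have := ZMod.val_cast_of_lt h2
    have : t₁ + m = t₂ := by
      rw [← ZMod.val_cast_of_lt h1, ← ZMod.val_cast_of_lt h2, hcast]
    omega
  have trans : ∀ u v, Relation.TransGen (Restrict (RegularConflict K L) S) u v →
      ∀ t₁ : ℕ, t₁ ≤ K - L → u = j + (t₁ : ZMod K) →
      ∃ t₂ : ℕ, t₂ ≤ K - L ∧ v = j + (t₂ : ZMod K) ∧ t₁ < t₂ := by
    intro u v h
    induction h with
    | single h => exact key _ _ h
    | tail _ h ih =>
      intro t₁ ht₁ hu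
      obtain ⟨t₂, ht₂, hv, hlt⟩ := ih t₁ ht₁ hu
      obtain ⟨t₃, ht₃, hw, hlt'⟩ := key _ _ h t₂ ht₂ hv
      exact ⟨t₃, ht₃, hw, hlt.trans hlt'⟩
  intro v hv
  have hvS : v ∈ S := by
    cases hv with
    | single h => exact h.2.2
    | tail _ h => exact h.2.2
  obtain ⟨t, ht, hveq⟩ := hvS
  obtain ⟨t₂, ht₂, hveq', hlt⟩ := trans v v hv t ht hveq
  have hcast : ((t : ℕ) : ZMod K) = ((t₂ : ℕ) : ZMod K) := by
    have h := hveq.symm.trans hveq'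
    linear_combination h
  have : t = t₂ := by
    rw [← ZMod.val_cast_of_lt (show t < K by omega),
      ← ZMod.val_cast_of_lt (show t₂ < K by omega), hcast]
  omega
end

section
/- For the digraph D on vertex set {0, 1, ..., K-1} (K ≥ L ≥ 1) whose arcs are all pairs (j, i) with i ≡ j + m (mod K) for m ∈ {1, ..., L-1}, the fractional dichromatic number satisfies χ_{A,f}(D) ≤ K/(K - L + 1). -/
/-- The fractional dichromatic number: the infimum of total weights of fractional
coverings of the vertices by acyclic sets (the LP relaxation of acyclic-set coloring). -/
noncomputable def fracDichromatic {V : Type*} [Fintype V] [DecidableEq V]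
    (A : V → V → Prop) : ℝ :=
  sInf { r : ℝ | ∃ g : Finset V → ℝ,
    (∀ S, 0 ≤ g S ∧ g S ≤ 1) ∧
    (∀ S : Finset V, ¬ AcyclicOn A ↑S → g S = 0) ∧
    (∀ v : V, 1 ≤ ∑ S : Finset V, if v ∈ S then g S else 0) ∧
    r = ∑ S : Finset V, g S }

open Finset in
/-- For the conflict digraph of the `(K, L)` regular network (`K ≥ L ≥ 1`), the
fractional dichromatic number satisfies `χ_{A,f}(D) ≤ K / (K - L + 1)`. -/
theorem stmt10 (K L : ℕ) [NeZero K] (hL : 1 ≤ L) (hKL : L ≤ K) :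
    fracDichromatic (RegularConflict K L) ≤ (K : ℝ) / ((K - L + 1 : ℕ) : ℝ) := by
  classical
  have hK : 0 < K := Nat.pos_of_ne_zero (NeZero.ne K)
  set d := K - L + 1 with hd
  have hd1 : 1 ≤ d := Nat.le_add_left 1 _
  have hdK : d ≤ K := by omega
  set Iv : ZMod K → Finset (ZMod K) :=
    fun a => (Finset.range d).image (fun i => a + (i : ℕ)) with hIv
  -- membership characterization
  have hmem : ∀ a v : ZMod K, v ∈ Iv a ↔ (v - a).val < d := by
    intro a v
    constructor
    · intro hv
      rw [hIv, mem_image] at hv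
      obtain ⟨i, hi, rfl⟩ := hv
      rw [mem_range] at hi
      have : a + (i : ℕ) - a = (i : ℕ) := by ring
      rw [this, ZMod.val_cast_of_lt (lt_of_lt_of_le hi hdK)]
      exact hi
    · intro h
      rw [hIv, mem_image]
      refine ⟨(v - a).val, mem_range.mpr h, ?_⟩
      rw [ZMod.natCast_rightInverse (v - a)]
      ring
  -- each step along the restricted digraph strictly increases val (· - a)
  have hstep : ∀ a u v : ZMod K, Restrict (RegularConflict K L) ↑(Iv a) u v →
      (u - a).val < (v - a).val := by
    rintro a u v ⟨⟨m, hm1, hm2, rfl⟩, hu, hv⟩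
    have hu' : (u - a).val < d := (hmem a u).mp hu
    have hv' : (u + (m : ℕ) - a).val < d := (hmem a _).mp hv
    have hlt : (u - a).val + m < K := by omega
    have heq : u + (m : ℕ) - a = (((u - a).val + m : ℕ) : ZMod K) := by
      push_cast
      rw [ZMod.natCast_rightInverse (u - a)]
      ring
    rw [heq, ZMod.val_cast_of_lt hlt]
    omega
  have hacyc : ∀ a : ZMod K, AcyclicOn (RegularConflict K L) ↑(Iv a) := by
    intro a v hv
    have key : ∀ u w : ZMod K,
        Relation.TransGen (Restrict (RegularConflict K L) ↑(Iv a)) u w →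
        (u - a).val < (w - a).val := by
      intro u w h
      induction h with
      | single h => exact hstep a _ _ h
      | tail _ h ih => exact lt_trans ih (hstep a _ _ h)
    exact lt_irrefl _ (key v v hv)
  -- each vertex lies in exactly d of the sets Iv a
  have hcount : ∀ v : ZMod K,
      (univ.filter (fun a : ZMod K => v ∈ Iv a)).card = d := by
    intro v
    rw [show d = (Finset.range d).card from (card_range d).symm]
    refine card_nbij' (fun a => (v - a).val) (fun n => v - (n : ℕ)) ?_ ?_ ?_ ?_
    · intro a ha
      rw [mem_coe, mem_filter] at ha
      exact mem_range.mpr ((hmem a v).mp ha.2)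
    · intro n hn
      rw [mem_coe, mem_filter]
      refine ⟨mem_univ _, (hmem _ v).mpr ?_⟩
      have : v - (v - (n : ℕ)) = (n : ℕ) := by ring
      rw [this, ZMod.val_cast_of_lt (lt_of_lt_of_le (mem_range.mp hn) hdK)]
      exact mem_range.mp hn
    · intro a _
      show v - ((v - a).val : ℕ) = a
      rw [ZMod.natCast_rightInverse (v - a)]
      ring
    · intro n hn
      show (v - (v - (n : ℕ))).val = n
      have : v - (v - (n : ℕ)) = (n : ℕ) := by ring
      rw [this, ZMod.val_cast_of_lt (lt_of_lt_of_le (mem_range.mp hn) hdK)]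
  -- the fractional coloring
  set g : Finset (ZMod K) → ℝ :=
    fun S => ((univ.filter (fun a : ZMod K => Iv a = S)).card : ℝ) / (d : ℝ) with hg
  have hdpos : (0:ℝ) < (d : ℝ) := by exact_mod_cast hd1
  -- the count in each fiber is at most d
  have hfib : ∀ S : Finset (ZMod K),
      (univ.filter (fun a : ZMod K => Iv a = S)).card ≤ d := by
    intro S
    rcases (univ.filter (fun a : ZMod K => Iv a = S)).eq_empty_or_nonempty with h | h
    · rw [h]; exact Nat.zero_le _
    · obtain ⟨a0, ha0⟩ := h
      rw [mem_filter] at ha0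
      have hsub : (univ.filter (fun a : ZMod K => Iv a = S)) ⊆ S := by
        intro a ha
        rw [mem_filter] at ha
        rw [← ha.2]
        refine (hmem a a).mpr ?_
        have h0 : (a - a : ZMod K) = 0 := by ring
        rw [h0, ZMod.val_zero]
        omega
      calc (univ.filter (fun a : ZMod K => Iv a = S)).card ≤ S.card := card_le_card hsub
        _ = (Iv a0).card := by rw [ha0.2]
        _ ≤ d := le_trans (card_image_le) (le_of_eq (card_range d))
  -- key sum identity for counts weighted by membership
  have hsum1 : ∀ v : ZMod K,
      (∑ S : Finset (ZMod K), if v ∈ S then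
        ((univ.filter (fun a : ZMod K => Iv a = S)).card : ℝ) else 0) = (d : ℝ) := by
    intro v
    have h1 : (∑ S : Finset (ZMod K), if v ∈ S then
        ((univ.filter (fun a : ZMod K => Iv a = S)).card : ℝ) else 0)
        = ∑ S : Finset (ZMod K), ∑ a ∈ univ.filter (fun a : ZMod K => Iv a = S),
            (if v ∈ Iv a then (1:ℝ) else 0) := by
      refine Finset.sum_congr rfl fun S _ => ?_
      rw [Finset.sum_congr rfl (fun a ha => by rw [(mem_filter.mp ha).2])]
      rw [Finset.sum_const]
      by_cases hvS : v ∈ S <;> simp [hvS]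
    rw [h1, Finset.sum_fiberwise univ (fun a => Iv a)
      (fun a => if v ∈ Iv a then (1:ℝ) else 0)]
    rw [Finset.sum_boole]
    rw [hcount v]
  -- total weight identity
  have hsum2 : (∑ S : Finset (ZMod K),
      ((univ.filter (fun a : ZMod K => Iv a = S)).card : ℝ)) = (K : ℝ) := by
    have h1 : (∑ S : Finset (ZMod K),
        ((univ.filter (fun a : ZMod K => Iv a = S)).card : ℝ))
        = ∑ S : Finset (ZMod K), ∑ a ∈ univ.filter (fun a : ZMod K => Iv a = S), (1:ℝ) := by
      refine Finset.sum_congr rfl fun S _ => ?_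
      rw [Finset.sum_const]; simp
    rw [h1, Finset.sum_fiberwise univ (fun a => Iv a) (fun _ => (1:ℝ))]
    simp [ZMod.card]
  -- membership in the LP feasible set
  have hmem_set : (K : ℝ) / (d : ℝ) ∈ { r : ℝ | ∃ g : Finset (ZMod K) → ℝ,
      (∀ S, 0 ≤ g S ∧ g S ≤ 1) ∧
      (∀ S : Finset (ZMod K), ¬ AcyclicOn (RegularConflict K L) ↑S → g S = 0) ∧
      (∀ v : ZMod K, 1 ≤ ∑ S : Finset (ZMod K), if v ∈ S then g S else 0) ∧
      r = ∑ S : Finset (ZMod K), g S } := by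
    refine ⟨g, ?_, ?_, ?_, ?_⟩
    · intro S
      constructor
      · exact div_nonneg (Nat.cast_nonneg _) (le_of_lt hdpos)
      · rw [hg, div_le_one hdpos]
        exact_mod_cast hfib S
    · intro S hS
      have : (univ.filter (fun a : ZMod K => Iv a = S)) = ∅ := by
        rw [Finset.filter_eq_empty_iff]
        intro a _
        intro h
        exact hS (h ▸ hacyc a)
      show ((univ.filter (fun a : ZMod K => Iv a = S)).card : ℝ) / (d : ℝ) = 0
      rw [this]; simp
    · intro v
      have : (∑ S : Finset (ZMod K), if v ∈ S then g S else 0)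
          = (∑ S : Finset (ZMod K), if v ∈ S then
              ((univ.filter (fun a : ZMod K => Iv a = S)).card : ℝ) else 0) / (d : ℝ) := by
        rw [Finset.sum_div]
        refine Finset.sum_congr rfl fun S _ => ?_
        by_cases hvS : v ∈ S <;> simp [hvS, hg]
      rw [this, hsum1 v, div_self (ne_of_gt hdpos)]
    · rw [hg]
      rw [← Finset.sum_div, hsum2]
  -- conclude
  have hbdd : BddBelow { r : ℝ | ∃ g : Finset (ZMod K) → ℝ,
      (∀ S, 0 ≤ g S ∧ g S ≤ 1) ∧
      (∀ S : Finset (ZMod K), ¬ AcyclicOn (RegularConflict K L) ↑S → g S = 0) ∧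
      (∀ v : ZMod K, 1 ≤ ∑ S : Finset (ZMod K), if v ∈ S then g S else 0) ∧
      r = ∑ S : Finset (ZMod K), g S } := by
    refine ⟨0, fun r hr => ?_⟩
    obtain ⟨g', hg', _, _, hr⟩ := hr
    rw [hr]
    exact Finset.sum_nonneg fun S _ => (hg' S).1
  exact csInf_le hbdd hmem_set
end

section
/- If a binary matrix M ∈ {0,1}^{m×n} has the property that in every row the 1-entries occur in consecutive columns (an interval matrix), then M is totally unimodular: every square submatrix has determinant 0, 1, or -1. -/
private lemma memS_mul {a b : ℚ} (ha : a ∈ ({-1, 0, 1} : Set ℚ))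
    (hb : b ∈ ({-1, 0, 1} : Set ℚ)) : a * b ∈ ({-1, 0, 1} : Set ℚ) := by
  simp only [Set.mem_insert_iff, Set.mem_singleton_iff] at *
  rcases ha with rfl | rfl | rfl <;> rcases hb with rfl | rfl | rfl <;> norm_num

private lemma memS_neg {a : ℚ} (ha : a ∈ ({-1, 0, 1} : Set ℚ)) :
    -a ∈ ({-1, 0, 1} : Set ℚ) := by
  simp only [Set.mem_insert_iff, Set.mem_singleton_iff] at *
  rcases ha with rfl | rfl | rfl <;> norm_num

private lemma memS_negpow (t : ℕ) : ((-1 : ℚ) ^ t) ∈ ({-1, 0, 1} : Set ℚ) := by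
  simp only [Set.mem_insert_iff, Set.mem_singleton_iff]
  rcases Nat.even_or_odd t with h | h
  · right; right; exact h.neg_one_pow
  · left; exact h.neg_one_pow

/-- A square matrix whose every row has at most one `+1`, at most one `-1`, and zeros
elsewhere has determinant in `{-1, 0, 1}`. -/
private lemma detC : ∀ (k : ℕ) (C : Matrix (Fin k) (Fin k) ℚ),
    (∀ i j, C i j = 1 ∨ C i j = -1 ∨ C i j = 0) →
    (∀ i j j', C i j = 1 → C i j' = 1 → j = j') →
    (∀ i j j', C i j = -1 → C i j' = -1 → j = j') →
    C.det ∈ ({-1, 0, 1} : Set ℚ) := by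
  intro k
  induction k with
  | zero =>
    intro C _ _ _
    simp [Matrix.det_fin_zero]
  | succ k ih =>
    intro C hval hplus hminus
    by_cases hrow : ∃ r : Fin (k + 1), ∀ j j', C r j ≠ 0 → C r j' ≠ 0 → j = j'
    · obtain ⟨r, hr⟩ := hrow
      by_cases hz : ∀ j, C r j = 0
      · have : C.det = 0 := Matrix.det_eq_zero_of_row_eq_zero r hz
        rw [this]; simp
      · push_neg at hz
        obtain ⟨j0, hj0⟩ := hz
        rw [Matrix.det_succ_row C r,
          Fintype.sum_eq_single j0 (fun j hj => by
            have hzj : C r j = 0 := by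
              by_contra h
              exact hj (hr j j0 h hj0)
            simp [hzj])]
        refine memS_mul (memS_mul (memS_negpow _) ?_) ?_
        · rcases hval r j0 with h | h | h <;> rw [h] <;> simp
        · refine ih _ (fun i j => hval _ _) ?_ ?_
          · intro i j j' h h'
            exact Fin.succAbove_right_injective (hplus _ _ _ h h')
          · intro i j j' h h'
            exact Fin.succAbove_right_injective (hminus _ _ _ h h')
    · push_neg at hrow
      have hdet0 : C.det = 0 := by
        by_contra hdet
        have hvec : C.mulVec (fun _ => (1 : ℚ)) = 0 := by
          funext i
          obtain ⟨j, j', hj, hj', hne⟩ := hrow i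
          -- extract a +1 and a -1 in row i
          obtain ⟨p, q, hp, hq, hpq⟩ :
              ∃ p q : Fin (k + 1), C i p = 1 ∧ C i q = -1 ∧ p ≠ q := by
            rcases hval i j with h1 | h1 | h1
            · rcases hval i j' with h2 | h2 | h2
              · exact absurd (hplus i j j' h1 h2) hne
              · exact ⟨j, j', h1, h2, hne⟩
              · exact absurd h2 hj'
            · rcases hval i j' with h2 | h2 | h2
              · exact ⟨j', j, h2, h1, hne.symm⟩
              · exact absurd (hminus i j j' h1 h2) hne
              · exact absurd h2 hj'
            · exact absurd h1 hj
          have hzero : ∀ x : Fin (k + 1), x ∉ ({p, q} : Finset (Fin (k + 1))) →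
              C i x = 0 := by
            intro x hx
            simp only [Finset.mem_insert, Finset.mem_singleton, not_or] at hx
            rcases hval i x with h | h | h
            · exact absurd (hplus i x p h hp) hx.1
            · exact absurd (hminus i x q h hq) hx.2
            · exact h
          have : ∑ x : Fin (k + 1), C i x = 0 := by
            rw [← Finset.sum_subset (Finset.subset_univ ({p, q} : Finset (Fin (k + 1))))
              (fun x _ hx => hzero x hx), Finset.sum_pair hpq, hp, hq]
            ring
          simpa [Matrix.mulVec, dotProduct] using this
        have := Matrix.eq_zero_of_mulVec_eq_zero hdet hvec
        have h10 : (1 : ℚ) = 0 := congrFun this 0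
        norm_num at h10
      rw [hdet0]; simp

/-- Extend a row of a matrix to a function on ℕ by zero. -/
private def Fext (k : ℕ) (N : Matrix (Fin k) (Fin k) ℚ) (i : Fin k) : ℕ → ℚ :=
  fun t => if h : t < k then N i ⟨t, h⟩ else 0

/-- The row-difference matrix. -/
private def Cmat (k : ℕ) (N : Matrix (Fin k) (Fin k) ℚ) : Matrix (Fin k) (Fin k) ℚ :=
  fun i j => Fext k N i (j : ℕ) - (if (j : ℕ) = 0 then 0 else Fext k N i ((j : ℕ) - 1))

/-- The upper-triangular all-ones matrix. -/
private def Smat (k : ℕ) : Matrix (Fin k) (Fin k) ℚ :=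
  fun p j => if (p : ℕ) ≤ (j : ℕ) then 1 else 0

private lemma key (k : ℕ) (N : Matrix (Fin k) (Fin k) ℚ) (i : Fin k) :
    ∀ (t : ℕ) (h : t < k),
      ∑ p : Fin k, Cmat k N i p * Smat k p ⟨t, h⟩ = Fext k N i t := by
  intro t
  induction t with
  | zero =>
    intro h
    have hs : ∀ p : Fin k, Cmat k N i p * Smat k p ⟨0, h⟩ =
        if p = ⟨0, h⟩ then Cmat k N i p else 0 := by
      intro p
      unfold Smat
      simp only [Fin.val_mk]
      by_cases hp : (p : ℕ) = 0
      · rw [if_pos (by omega), if_pos (Fin.ext hp), mul_one]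
      · rw [if_neg (by omega), if_neg (fun hq => hp (by rw [hq])), mul_zero]
    rw [Finset.sum_congr rfl (fun p _ => hs p), Finset.sum_ite_eq' Finset.univ]
    simp only [Finset.mem_univ, if_true]
    unfold Cmat
    rw [if_pos rfl, sub_zero]
  | succ t IH =>
    intro h
    have ht : t < k := by omega
    have hs : ∀ p : Fin k, Cmat k N i p * Smat k p ⟨t + 1, h⟩ =
        Cmat k N i p * Smat k p ⟨t, ht⟩ +
        (if p = ⟨t + 1, h⟩ then Cmat k N i p else 0) := by
      intro p
      unfold Smat
      simp only [Fin.val_mk]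
      by_cases h1 : (p : ℕ) ≤ t
      · rw [if_pos (by omega), if_pos h1,
          if_neg (fun hq => by rw [hq] at h1; simp only [Fin.val_mk] at h1; omega)]
        ring
      · by_cases h2 : (p : ℕ) = t + 1
        · rw [if_pos (by omega), if_neg (by omega), if_pos (Fin.ext h2)]
          ring
        · rw [if_neg (by omega), if_neg (by omega),
            if_neg (fun hq => h2 (by rw [hq]))]
          ring
    rw [Finset.sum_congr rfl (fun p _ => hs p), Finset.sum_add_distrib, IH ht,
      Finset.sum_ite_eq' Finset.univ]
    simp only [Finset.mem_univ, if_true]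
    unfold Cmat
    simp only [Fin.val_mk]
    rw [if_neg (by omega)]
    simp only [show t + 1 - 1 = t from rfl]
    ring

/-- A square 0/1 matrix with convex rows has determinant in `{-1, 0, 1}`. -/
private lemma detN (k : ℕ) (N : Matrix (Fin k) (Fin k) ℚ)
    (h01 : ∀ i j, N i j = 0 ∨ N i j = 1)
    (hconv : ∀ i (j1 j j2 : Fin k), j1 ≤ j → j ≤ j2 → N i j1 = 1 → N i j2 = 1 →
      N i j = 1) :
    N.det ∈ ({-1, 0, 1} : Set ℚ) := by
  have hF01 : ∀ i t, Fext k N i t = 0 ∨ Fext k N i t = 1 := by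
    intro i t
    unfold Fext
    split
    · exact h01 i _
    · left; rfl
  have hFconv : ∀ i t1 t t2, t1 ≤ t → t ≤ t2 → Fext k N i t1 = 1 →
      Fext k N i t2 = 1 → Fext k N i t = 1 := by
    intro i t1 t t2 h1 h2 e1 e2
    unfold Fext at e1 e2 ⊢
    split at e2
    · rename_i h2k
      have h1k : t1 < k := by omega
      have hk : t < k := by omega
      rw [dif_pos h1k] at e1
      rw [dif_pos hk]
      exact hconv i ⟨t1, h1k⟩ ⟨t, hk⟩ ⟨t2, h2k⟩ h1 h2 e1 e2
    · norm_num at e2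
  have hNS : N = Cmat k N * Smat k := by
    ext i j
    rw [Matrix.mul_apply]
    obtain ⟨t, ht⟩ := j
    rw [key k N i t ht]
    unfold Fext
    rw [dif_pos ht]
  have hdetS : (Smat k).det = 1 := by
    rw [Matrix.det_of_upperTriangular (by
      intro a b hab
      unfold Smat
      rw [if_neg]
      have : (b : ℕ) < (a : ℕ) := hab
      omega)]
    simp [Smat]
  rw [hNS, Matrix.det_mul, hdetS, mul_one]
  -- properties of Cmat
  have hCplus : ∀ i (j : Fin k), Cmat k N i j = 1 →
      Fext k N i (j : ℕ) = 1 ∧ ((j : ℕ) = 0 ∨ Fext k N i ((j : ℕ) - 1) = 0) := by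
    intro i j hj
    unfold Cmat at hj
    by_cases h0 : (j : ℕ) = 0
    · rw [if_pos h0, sub_zero] at hj
      exact ⟨hj, Or.inl h0⟩
    · rw [if_neg h0] at hj
      rcases hF01 i (j : ℕ) with h | h <;> rcases hF01 i ((j : ℕ) - 1) with h' | h' <;>
        rw [h, h'] at hj <;> norm_num at hj <;> exact ⟨h, Or.inr h'⟩
  have hCminus : ∀ i (j : Fin k), Cmat k N i j = -1 →
      Fext k N i (j : ℕ) = 0 ∧ (j : ℕ) ≠ 0 ∧ Fext k N i ((j : ℕ) - 1) = 1 := by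
    intro i j hj
    unfold Cmat at hj
    by_cases h0 : (j : ℕ) = 0
    · rw [if_pos h0, sub_zero] at hj
      rcases hF01 i (j : ℕ) with h | h <;> rw [h] at hj <;> norm_num at hj
    · rw [if_neg h0] at hj
      rcases hF01 i (j : ℕ) with h | h <;> rcases hF01 i ((j : ℕ) - 1) with h' | h' <;>
        rw [h, h'] at hj <;> norm_num at hj <;> exact ⟨h, h0, h'⟩
  apply detC k (Cmat k N)
  · intro i j
    unfold Cmat
    by_cases h0 : (j : ℕ) = 0
    · rw [if_pos h0, sub_zero]
      rcases hF01 i (j : ℕ) with h | h <;> rw [h] <;> norm_num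
    · rw [if_neg h0]
      rcases hF01 i (j : ℕ) with h | h <;> rcases hF01 i ((j : ℕ) - 1) with h' | h' <;>
        rw [h, h'] <;> norm_num
  · intro i j j' h h'
    by_contra hne
    have main : ∀ a b : Fin k, Cmat k N i a = 1 → Cmat k N i b = 1 →
        (a : ℕ) < (b : ℕ) → False := by
      intro a b ha hb hab
      obtain ⟨ha1, _⟩ := hCplus i a ha
      obtain ⟨hb1, hb2⟩ := hCplus i b hb
      rcases hb2 with h0 | h0
      · omega
      · have : Fext k N i ((b : ℕ) - 1) = 1 :=
          hFconv i (a : ℕ) ((b : ℕ) - 1) (b : ℕ) (by omega) (by omega) ha1 hb1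
        rw [this] at h0
        norm_num at h0
    rcases Nat.lt_trichotomy (j : ℕ) (j' : ℕ) with hlt | heq | hlt
    · exact main j j' h h' hlt
    · exact hne (Fin.ext heq)
    · exact main j' j h' h hlt
  · intro i j j' h h'
    by_contra hne
    have main : ∀ a b : Fin k, Cmat k N i a = -1 → Cmat k N i b = -1 →
        (a : ℕ) < (b : ℕ) → False := by
      intro a b ha hb hab
      obtain ⟨ha0, ha1, ha2⟩ := hCminus i a ha
      obtain ⟨hb0, hb1, hb2⟩ := hCminus i b hb
      have : Fext k N i (a : ℕ) = 1 :=
        hFconv i ((a : ℕ) - 1) (a : ℕ) ((b : ℕ) - 1) (by omega) (by omega) ha2 hb2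
      rw [this] at ha0
      norm_num at ha0
    rcases Nat.lt_trichotomy (j : ℕ) (j' : ℕ) with hlt | heq | hlt
    · exact main j j' h h' hlt
    · exact hne (Fin.ext heq)
    · exact main j' j h' h hlt

/-- If every row of a 0/1 matrix has its 1-entries in consecutive columns (an interval
matrix), then the matrix is totally unimodular: every square submatrix has determinant
0, 1, or -1. -/
theorem stmt14 {m n : ℕ} (M : Matrix (Fin m) (Fin n) ℚ)
    (h01 : ∀ i j, M i j = 0 ∨ M i j = 1)
    (hint : ∀ i, ∃ a b : Fin n, a ≤ b ∧ ∀ j, M i j = 1 ↔ (a ≤ j ∧ j ≤ b)) :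
    ∀ (k : ℕ) (f : Fin k → Fin m) (g : Fin k → Fin n),
      Function.Injective f → Function.Injective g →
      (M.submatrix f g).det ∈ ({-1, 0, 1} : Set ℚ) := by
  intro k f g hf hg
  set σ := Tuple.sort g with hσ
  have hmono : StrictMono (g ∘ ⇑σ) :=
    (Tuple.monotone_sort g).strictMono_of_injective (hg.comp σ.injective)
  set N : Matrix (Fin k) (Fin k) ℚ := M.submatrix f (g ∘ ⇑σ) with hN
  have hNdet : N.det ∈ ({-1, 0, 1} : Set ℚ) := by
    apply detN
    · intro i j
      exact h01 _ _
    · intro i j1 j j2 hle1 hle2 e1 e2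
      obtain ⟨a, b, _, hiff⟩ := hint (f i)
      have e1' := (hiff _).mp e1
      have e2' := (hiff _).mp e2
      rw [hN, Matrix.submatrix_apply, hiff]
      exact ⟨le_trans e1'.1 (hmono.monotone hle1), le_trans (hmono.monotone hle2) e2'.2⟩
  have h1 : N = (M.submatrix f g).submatrix id ⇑σ := rfl
  have h2 := Matrix.det_permute' σ (M.submatrix f g)
  rw [← h1] at h2
  rcases Int.units_eq_one_or (Equiv.Perm.sign σ) with hs | hs
  · rw [hs] at h2
    simp only [Units.val_one, Int.cast_one, one_mul] at h2
    rwa [← h2]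
  · rw [hs] at h2
    simp only [Units.val_neg, Units.val_one, Int.cast_neg, Int.cast_one, neg_mul,
      one_mul] at h2
    have : (M.submatrix f g).det = -N.det := by rw [h2]; ring
    rw [this]
    exact memS_neg hNdet
end
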